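/- Let μ be a compactly supported Borel probability measure on ℝ^d and let Λ be a tight-frame spectrum for μ with constant A > 0. Then the tiling equation δ_Λ * |μ̂|² = A holds: for every ξ ∈ ℝ^d, ∑_{λ∈Λ} |μ̂(ξ − λ)|² = A. -/

import Mathlib

open MeasureTheory Metric Set ENNReal

noncomputable section

/-- Euclidean space ℝ^d. -/
abbrev Euc (d : ℕ) := EuclideanSpace ℝ (Fin d)

/-- The exponential `e^{-2πi l·x}`. -/
noncomputable def fexp {d : ℕ} (l x : Euc d) : ℂ :=
  Complex.exp (-(2 * (Real.pi : ℂ) * Complex.I * ((inner ℝ l x : ℝ) : ℂ)))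

/-- `Λ` is a tight-frame spectrum for `μ` with constant `A > 0`:
for every `f ∈ L²(μ)`, `∑_{λ∈Λ} |∫ f(x) e^{-2πi λ·x} dμ(x)|² = A ∫ |f|² dμ`. -/
def IsTightFrameSpectrum {d : ℕ} (μ : Measure (Euc d)) (Λ : Set (Euc d)) (A : ℝ) : Prop :=
  Λ.Countable ∧ 0 < A ∧
    ∀ f : Euc d → ℂ, MemLp f 2 μ →
      ∑' l : Λ, ‖∫ x, f x * fexp (l : Euc d) x ∂μ‖ ^ 2 = A * ∫ x, ‖f x‖ ^ 2 ∂μ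

/-- `μ` is tight-frame spectral: it admits a tight-frame spectrum with some constant `A > 0`. -/
def TightFrameSpectral {d : ℕ} (μ : Measure (Euc d)) : Prop :=
  ∃ Λ A, IsTightFrameSpectrum μ Λ A

/-- The segment measure `μ_{x₀,v}`: pushforward of Lebesgue measure on `[0,1]`
under `t ↦ x₀ + t • v`. -/
noncomputable def segMeasure (x0 v : Euc 2) : Measure (Euc 2) :=
  Measure.map (fun t : ℝ => x0 + t • v) (volume.restrict (Set.Icc (0:ℝ) 1))

/-- `μ̃`: the pushforward of `μ` under `x ↦ -x`. -/
noncomputable def mneg {d : ℕ} (μ : Measure (Euc d)) : Measure (Euc d) :=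
  Measure.map (fun x => -x) μ

/-- The convolution `μ * ν`: pushforward of `μ × ν` under `(x,y) ↦ x + y`. -/
noncomputable def mconv {d : ℕ} (μ ν : Measure (Euc d)) : Measure (Euc d) :=
  Measure.map (fun p : Euc d × Euc d => p.1 + p.2) (μ.prod ν)

/-- The Fourier transform `f̂(ξ) = ∫ f(x) e^{-2πi ξ·x} dx`. -/
noncomputable def ftFun {d : ℕ} (f : Euc d → ℂ) (ξ : Euc d) : ℂ :=
  ∫ x, f x * fexp ξ x

/-- The Fourier transform of a measure: `μ̂(ξ) = ∫ e^{-2πi ξ·x} dμ(x)`. -/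
noncomputable def ftMeas {d : ℕ} (μ : Measure (Euc d)) (ξ : Euc d) : ℂ :=
  ∫ x, fexp ξ x ∂μ

lemma norm_fexp {d : ℕ} (l x : Euc d) : ‖fexp l x‖ = 1 := by
  have : -(2 * (Real.pi : ℂ) * Complex.I * ((inner ℝ l x : ℝ) : ℂ))
      = ((-(2 * Real.pi * inner ℝ l x) : ℝ) : ℂ) * Complex.I := by
    push_cast; ring
  rw [fexp, this, Complex.norm_exp_ofReal_mul_I]

lemma fexp_mul_fexp {d : ℕ} (a b x : Euc d) : fexp a x * fexp b x = fexp (a + b) x := by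
  rw [fexp, fexp, fexp, ← Complex.exp_add, inner_add_left]
  push_cast
  ring_nf

lemma fexp_neg {d : ℕ} (l x : Euc d) : fexp (-l) x = starRingEnd ℂ (fexp l x) := by
  rw [fexp, fexp, ← Complex.exp_conj, inner_neg_left]
  simp only [map_neg, map_mul, Complex.conj_I, Complex.conj_ofReal, map_ofNat]
  push_cast
  ring_nf

lemma continuous_fexp {d : ℕ} (l : Euc d) : Continuous (fexp l) := by
  unfold fexp
  fun_prop

lemma memLp_fexp {d : ℕ} (μ : Measure (Euc d)) [IsFiniteMeasure μ] (l : Euc d)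
    (p : ℝ≥0∞) : MemLp (fexp l) p μ :=
  MemLp.of_bound (continuous_fexp l).aestronglyMeasurable 1
    (Filter.Eventually.of_forall fun x => (norm_fexp l x).le)

lemma norm_ftMeas_neg {d : ℕ} (μ : Measure (Euc d)) (ξ : Euc d) :
    ‖ftMeas μ (-ξ)‖ = ‖ftMeas μ ξ‖ := by
  simp only [ftMeas, fexp_neg, integral_conj, RCLike.norm_conj]

lemma norm_integral_fexp_neg_mul_fexp {d : ℕ} (μ : Measure (Euc d)) (ξ l : Euc d) :
    ‖∫ x, fexp (-ξ) x * fexp l x ∂μ‖ = ‖ftMeas μ (ξ - l)‖ := by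
  simp only [fexp_mul_fexp, neg_add_eq_sub, ← neg_sub ξ l]
  exact norm_ftMeas_neg μ (ξ - l)

theorem tight_frame_spectrum_tiling_general
    {d : ℕ} (μ : Measure (Euc d)) [IsProbabilityMeasure μ]
    (Λ : Set (Euc d)) (A : ℝ) (hΛ : IsTightFrameSpectrum μ Λ A) :
    ∀ ξ : Euc d, ∑' l : Λ, ‖ftMeas μ (ξ - (l : Euc d))‖ ^ 2 = A := by
  intro ξ
  -- Test the frame identity against the character `x ↦ e^{2πi ξ·x}`, whose `L²(μ)` norm is `1`.
  have hframe := hΛ.2.2 (fexp (-ξ)) (memLp_fexp μ (-ξ) 2)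
  simpa only [norm_integral_fexp_neg_mul_fexp, norm_fexp, one_pow, integral_const,
    probReal_univ, smul_eq_mul, mul_one] using hframe

/-- A tight-frame spectrum `Λ` with constant `A` for a compactly supported probability
measure `μ` satisfies the tiling equation `∑_{λ∈Λ} |μ̂(ξ-λ)|² = A` for every `ξ`. -/
theorem tight_frame_spectrum_tiling
    {d : ℕ} (μ : Measure (Euc d)) [IsProbabilityMeasure μ]
    (hcpt : ∃ K : Set (Euc d), IsCompact K ∧ μ Kᶜ = 0)
    (Λ : Set (Euc d)) (A : ℝ) (hΛ : IsTightFrameSpectrum μ Λ A) :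
    ∀ ξ : Euc d, ∑' l : Λ, ‖ftMeas μ (ξ - (l : Euc d))‖ ^ 2 = A :=
  tight_frame_spectrum_tiling_general μ Λ A hΛ
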